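/- arXiv:2501.09269 — 4 statements merged into one kernel-verified Lean document; each statement's English description precedes it below -/
import Mathlib

section
/- In the Picard lattice of a degree 2 del Pezzo surface, the number of conic bundle classes, i.e. classes f with f^2 = 0 and -K·f = 2, up to the identification described by their singular fibers, is 126 = 7 + 35 + 42 + 35 + 7. -/
/-- Picard lattice of a degree 2 del Pezzo surface: a class `aL - ∑ bᵢ Eᵢ` is
recorded as `(a, b)`; the intersection form is `diag(1, -1, …, -1)`. -/
def dp2Dot (u v : ℤ × (Fin 7 → ℤ)) : ℤ := u.1 * v.1 - ∑ i, u.2 i * v.2 i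

/-- The anticanonical class `-K = 3L - E₁ - ⋯ - E₇`. -/
def dp2NegK : ℤ × (Fin 7 → ℤ) := (3, fun _ => 1)

/-- A `(-1)`-class: `e² = -1` and `-K·e = 1`. -/
def IsMinusOneClass (e : ℤ × (Fin 7 → ℤ)) : Prop :=
  dp2Dot e e = -1 ∧ dp2Dot dp2NegK e = 1

/-!
Write `f = aL - ∑ bᵢEᵢ`. The conditions `f² = 0`, `-K·f = 2` read `∑ bᵢ² = a²`,
`∑ bᵢ = 3a - 2`, and Cauchy–Schwarz (on all seven `bᵢ`, then on six of them) confines such classes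
to the box `1 ≤ a ≤ 5`, `0 ≤ bᵢ ≤ 2`, where a finite search finds 126 of them.

Each of them is a sum of two `(-1)`-classes: if `e` is a `(-1)`-class with `e·f = 0`, then
`(f - e)² = -1` and `-K·(f - e) = 1`. Such an `e` is `Eⱼ` when `bⱼ = 0`. Otherwise apply the
Geiser involution `x ↦ (-K·x)(-K) - x`, an isometry fixing `-K` that sends `f` to
`(6 - a, 2 - b)`: since `b = (1, …, 1)` would force `a = 3` and `a² = 7`, either `f` or its image
has a zero coordinate.
-/

open Finset

local notation "Pic" => ℤ × (Fin 7 → ℤ)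

def IsConicClass (f : Pic) : Prop :=
  dp2Dot f f = 0 ∧ dp2Dot dp2NegK f = 2

instance : DecidablePred IsConicClass := fun _ => inferInstanceAs (Decidable (_ ∧ _))

/-- With the convention `aL - ∑ bᵢEᵢ`, the class `Eⱼ` has `b = -δⱼ`. -/
def dp2E (j : Fin 7) : Pic := (0, -Pi.single j 1)

/-- The action on `Pic` of the Geiser involution, the deck transformation of the anticanonical
double cover `S → ℙ²`. -/
def dp2Geiser (x : Pic) : Pic := dp2Dot dp2NegK x • dp2NegK - x

section Bilinear

variable (u v w : Pic)

theorem dp2Dot_comm : dp2Dot u v = dp2Dot v u := by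
  simp only [dp2Dot, mul_comm]

theorem dp2Dot_sub_left : dp2Dot (u - v) w = dp2Dot u w - dp2Dot v w := by
  simp only [dp2Dot, Prod.fst_sub, Prod.snd_sub, Pi.sub_apply, sub_mul, sum_sub_distrib]
  ring

theorem dp2Dot_sub_right : dp2Dot u (v - w) = dp2Dot u v - dp2Dot u w := by
  rw [dp2Dot_comm, dp2Dot_sub_left, dp2Dot_comm v, dp2Dot_comm w]

theorem dp2Dot_smul_left (c : ℤ) : dp2Dot (c • u) v = c * dp2Dot u v := by
  simp only [dp2Dot, Prod.smul_fst, Prod.smul_snd, Pi.smul_apply, smul_eq_mul, mul_assoc,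
    ← mul_sum]
  ring

theorem dp2Dot_smul_right (c : ℤ) : dp2Dot u (c • v) = c * dp2Dot u v := by
  rw [dp2Dot_comm, dp2Dot_smul_left, dp2Dot_comm]

end Bilinear

theorem dp2Dot_negK_negK : dp2Dot dp2NegK dp2NegK = 2 := by decide

theorem dp2Dot_dp2E (j : Fin 7) (f : Pic) : dp2Dot (dp2E j) f = f.2 j := by
  simp [dp2Dot, dp2E, Pi.single_apply]

theorem isMinusOneClass_dp2E (j : Fin 7) : IsMinusOneClass (dp2E j) := by
  refine ⟨?_, ?_⟩
  · rw [dp2Dot_dp2E]; simp [dp2E]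
  · rw [dp2Dot_comm, dp2Dot_dp2E]; rfl

theorem IsConicClass.isMinusOneClass_sub {f e : Pic} (hf : IsConicClass f) (he : IsMinusOneClass e)
    (hef : dp2Dot e f = 0) : IsMinusOneClass (f - e) := by
  refine ⟨?_, ?_⟩
  · rw [dp2Dot_sub_left, dp2Dot_sub_right, dp2Dot_sub_right, dp2Dot_comm f e, hf.1, he.1, hef]
    norm_num
  · rw [dp2Dot_sub_right, hf.2, he.2]
    norm_num

theorem dp2Dot_negK_dp2Geiser (x : Pic) : dp2Dot dp2NegK (dp2Geiser x) = dp2Dot dp2NegK x := by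
  rw [dp2Geiser, dp2Dot_sub_right, dp2Dot_smul_right, dp2Dot_negK_negK]
  ring

theorem dp2Dot_dp2Geiser (x y : Pic) : dp2Dot (dp2Geiser x) (dp2Geiser y) = dp2Dot x y := by
  simp only [dp2Geiser, dp2Dot_sub_left, dp2Dot_sub_right, dp2Dot_smul_left, dp2Dot_smul_right,
    dp2Dot_negK_negK, dp2Dot_comm x dp2NegK]
  ring

theorem dp2Geiser_dp2Geiser (x : Pic) : dp2Geiser (dp2Geiser x) = x := by
  rw [dp2Geiser, dp2Dot_negK_dp2Geiser, dp2Geiser, sub_sub_cancel]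

theorem isMinusOneClass_dp2Geiser {e : Pic} :
    IsMinusOneClass (dp2Geiser e) ↔ IsMinusOneClass e := by
  rw [IsMinusOneClass, IsMinusOneClass, dp2Dot_dp2Geiser, dp2Dot_negK_dp2Geiser]

theorem isConicClass_dp2Geiser {f : Pic} : IsConicClass (dp2Geiser f) ↔ IsConicClass f := by
  rw [IsConicClass, IsConicClass, dp2Dot_dp2Geiser, dp2Dot_negK_dp2Geiser]

theorem IsConicClass.snd_dp2Geiser {f : Pic} (hf : IsConicClass f) (i : Fin 7) :
    (dp2Geiser f).2 i = 2 - f.2 i := by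
  rw [dp2Geiser, hf.2]
  simp [dp2NegK]

theorem IsConicClass.fst_mem_Icc {f : Pic} (hf : IsConicClass f) : f.1 ∈ Icc 1 5 := by
  obtain ⟨hsq, hK⟩ := hf
  simp only [dp2Dot, dp2NegK, one_mul] at hsq hK
  have hcs : (∑ i, f.2 i) ^ 2 ≤ 7 * ∑ i, f.2 i ^ 2 := by
    simpa using sq_sum_le_card_mul_sum_sq (s := univ) (f := f.2)
  simp only [sq] at hcs
  rw [mem_Icc]
  constructor <;> nlinarith

theorem IsConicClass.snd_mem_Icc {f : Pic} (hf : IsConicClass f) (i : Fin 7) :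
    f.2 i ∈ Icc 0 2 := by
  have ha := mem_Icc.1 hf.fst_mem_Icc
  obtain ⟨hsq, hK⟩ := hf
  simp only [dp2Dot, dp2NegK, one_mul] at hsq hK
  rw [← add_sum_erase _ _ (mem_univ i)] at hsq hK
  have hcs : (∑ j ∈ univ.erase i, f.2 j) ^ 2 ≤ 6 * ∑ j ∈ univ.erase i, f.2 j ^ 2 := by
    simpa using sq_sum_le_card_mul_sum_sq (s := univ.erase i) (f := f.2)
  simp only [sq] at hcs
  rw [mem_Icc]
  constructor <;> nlinarith

theorem IsConicClass.exists_snd_eq_zero_or_snd_dp2Geiser_eq_zero {f : Pic} (hf : IsConicClass f) :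
    ∃ j, f.2 j = 0 ∨ (dp2Geiser f).2 j = 0 := by
  by_contra! h
  have hone : ∀ j, f.2 j = 1 := fun j => by
    have hb := mem_Icc.1 (hf.snd_mem_Icc j)
    have hι := hf.snd_dp2Geiser j
    have hj := h j
    omega
  obtain ⟨hsq, hK⟩ := hf
  simp only [dp2Dot, dp2NegK, hone, mul_one, sum_const, card_univ, Fintype.card_fin,
    Int.nsmul_eq_mul, Nat.cast_ofNat] at hsq hK
  nlinarith

theorem IsConicClass.exists_isMinusOneClass_dp2Dot_eq_zero {f : Pic} (hf : IsConicClass f) :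
    ∃ e, IsMinusOneClass e ∧ dp2Dot e f = 0 := by
  obtain ⟨j, hj | hj⟩ := hf.exists_snd_eq_zero_or_snd_dp2Geiser_eq_zero
  · exact ⟨dp2E j, isMinusOneClass_dp2E j, by rw [dp2Dot_dp2E, hj]⟩
  · refine ⟨dp2Geiser (dp2E j), isMinusOneClass_dp2Geiser.2 (isMinusOneClass_dp2E j), ?_⟩
    rw [← dp2Geiser_dp2Geiser f, dp2Dot_dp2Geiser, dp2Dot_dp2E, hj]

theorem IsConicClass.exists_add {f : Pic} (hf : IsConicClass f) :
    ∃ e e', IsMinusOneClass e ∧ IsMinusOneClass e' ∧ f = e + e' := by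
  obtain ⟨e, he, hef⟩ := hf.exists_isMinusOneClass_dp2Dot_eq_zero
  exact ⟨e, f - e, he, hf.isMinusOneClass_sub he hef, (add_sub_cancel e f).symm⟩

theorem ncard_setOf_isConicClass : {f : Pic | IsConicClass f}.ncard = 126 := by
  have hbox : {f : Pic | IsConicClass f} =
      ↑((Icc 1 5 ×ˢ Fintype.piFinset fun _ => Icc 0 2).filter IsConicClass) := by
    ext f
    simp only [Set.mem_ofPred, coe_filter, mem_product, Fintype.mem_piFinset]
    exact ⟨fun hf => ⟨⟨hf.fst_mem_Icc, hf.snd_mem_Icc⟩, hf⟩, And.right⟩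
  rw [hbox, Set.ncard_coe_finset]
  decide +kernel

/-- The number of conic bundle classes on a degree 2 del Pezzo surface, i.e. classes `f`
with `f² = 0` and `-K·f = 2` that are sums of two `(-1)`-classes, is
`126 = 7 + 35 + 42 + 35 + 7`. -/
theorem dp2_conic_bundle_count :
    {f : ℤ × (Fin 7 → ℤ) | dp2Dot f f = 0 ∧ dp2Dot dp2NegK f = 2 ∧
      ∃ e e', IsMinusOneClass e ∧ IsMinusOneClass e' ∧ f = e + e'}.ncard = 126 ∧
    (126 : ℕ) = 7 + 35 + 42 + 35 + 7 := by
  have hset : {f : ℤ × (Fin 7 → ℤ) | dp2Dot f f = 0 ∧ dp2Dot dp2NegK f = 2 ∧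
      ∃ e e', IsMinusOneClass e ∧ IsMinusOneClass e' ∧ f = e + e'} = {f | IsConicClass f} :=
    Set.ext fun _ => ⟨fun h => ⟨h.1, h.2.1⟩, fun hf => ⟨hf.1, hf.2, hf.exists_add⟩⟩
  exact ⟨hset ▸ ncard_setOf_isConicClass, rfl⟩
end

section
/- (Sign lemma for conic bundles on dP2.) Let S be a smooth del Pezzo surface of degree 2 with its 56 lines A_i, B_ij, C_ij, D_i (i ≠ j in {1,...,7}). Let sign: {lines} → {1,-1} be a map satisfying sign(A_i) ≠ sign(D_i) and sign(B_ij) ≠ sign(C_ij) for all i ≠ j. Suppose moreover that for every conic bundle on S, if some singular fiber ℓ + ℓ' satisfies sign(ℓ) ≠ sign(ℓ'), then every singular fiber of that conic bundle has components of different signs. Then there exists a conic bundle on S with singular fibers ℓ_1 + ℓ_2 and ℓ'_1 + ℓ'_2 such that sign(ℓ_1) = sign(ℓ_2) = 1 and sign(ℓ'_1) = sign(ℓ'_2) = -1. -/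
/-- The 56 lines on a degree 2 del Pezzo surface: `A i`, `B i j = B j i` (`i ≠ j`),
`C i j = C j i` (`i ≠ j`), `D i`. -/
inductive DP2Line : Type
  | A : Fin 7 → DP2Line
  | B : Fin 7 → Fin 7 → DP2Line
  | C : Fin 7 → Fin 7 → DP2Line
  | D : Fin 7 → DP2Line

/-- The 126 conic bundles on a degree 2 del Pezzo surface, of types (I)-(V).
Types (II) and (IV) are indexed by an ordering of `{1,…,7}` whose first three elements
form the 3-subset `Λ`; type (III) is indexed by an ordered pair `i ≠ j`. -/
inductive DP2Bundle : Type
  | I : Fin 7 → DP2Bundle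
  | II : Equiv.Perm (Fin 7) → DP2Bundle
  | III : (i j : Fin 7) → i ≠ j → DP2Bundle
  | IV : Equiv.Perm (Fin 7) → DP2Bundle
  | V : Fin 7 → DP2Bundle

open DP2Line in
/-- The singular fibers `ℓ + ℓ'` of each conic bundle, as pairs of lines. -/
def DP2Bundle.fibers : DP2Bundle → Set (DP2Line × DP2Line)
  | .I i => {p | ∃ j, j ≠ i ∧ p = (A j, B i j)}
  | .II σ => {(A (σ 0), C (σ 1) (σ 2)), (A (σ 1), C (σ 0) (σ 2)), (A (σ 2), C (σ 0) (σ 1)),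
      (B (σ 3) (σ 4), B (σ 5) (σ 6)), (B (σ 3) (σ 5), B (σ 4) (σ 6)),
      (B (σ 3) (σ 6), B (σ 4) (σ 5))}
  | .III i j _ => {(A j, D i)} ∪ {p | ∃ k, k ≠ i ∧ k ≠ j ∧ p = (B i k, C j k)}
  | .IV σ => {(B (σ 1) (σ 2), D (σ 0)), (B (σ 0) (σ 2), D (σ 1)), (B (σ 0) (σ 1), D (σ 2)),
      (C (σ 3) (σ 4), C (σ 5) (σ 6)), (C (σ 3) (σ 5), C (σ 4) (σ 6)),
      (C (σ 3) (σ 6), C (σ 4) (σ 5))}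
  | .V i => {p | ∃ j, j ≠ i ∧ p = (C i j, D j)}

open DP2Line in
/-- Sign lemma for conic bundles on a degree 2 del Pezzo surface: if `sign(Aᵢ) ≠ sign(Dᵢ)`,
`sign(Bᵢⱼ) ≠ sign(Cᵢⱼ)`, and mixed-sign singular fibers propagate within each conic bundle,
then some conic bundle has a singular fiber with both components of sign `1` and a singular
fiber with both components of sign `-1`. -/
theorem dp2_sign_lemma (sign : DP2Line → ℤ)
    (hval : ∀ ℓ, sign ℓ = 1 ∨ sign ℓ = -1)
    (hBsymm : ∀ i j, sign (B i j) = sign (B j i))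
    (hCsymm : ∀ i j, sign (C i j) = sign (C j i))
    (hAD : ∀ i, sign (A i) ≠ sign (D i))
    (hBC : ∀ i j, i ≠ j → sign (B i j) ≠ sign (C i j))
    (hprop : ∀ b : DP2Bundle, (∃ p ∈ b.fibers, sign p.1 ≠ sign p.2) →
      ∀ p ∈ b.fibers, sign p.1 ≠ sign p.2) :
    ∃ b : DP2Bundle, (∃ p ∈ b.fibers, sign p.1 = 1 ∧ sign p.2 = 1) ∧
      (∃ p ∈ b.fibers, sign p.1 = -1 ∧ sign p.2 = -1) := by
  by_contra hG
  have hD' : ∀ i, sign (D i) = - sign (A i) := by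
    intro i; have := hAD i
    rcases hval (A i) with h|h <;> rcases hval (D i) with h'|h' <;> omega
  have hC' : ∀ i j, i ≠ j → sign (C i j) = - sign (B i j) := by
    intro i j hij; have := hBC i j hij
    rcases hval (B i j) with h|h <;> rcases hval (C i j) with h'|h' <;> omega
  have mk : ∀ (bb : DP2Bundle) (x y x' y' : DP2Line), (x, y) ∈ bb.fibers →
      (x', y') ∈ bb.fibers → sign x = 1 → sign y = 1 → sign x' = -1 → sign y' = -1 →
      False := by
    intro bb x y x' y' hm hm' h1 h2 h3 h4
    exact hG ⟨bb, ⟨(x, y), hm, h1, h2⟩, ⟨(x', y'), hm', h3, h4⟩⟩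
  have claim3 : ∀ i j k : Fin 7, ∀ hij : i ≠ j, k ≠ i → k ≠ j →
      sign (A i) ≠ sign (A j) → sign (B i k) = sign (A j) := by
    intro i j k hij hki hkj hA
    have h1 : ((A j, D i)) ∈ (DP2Bundle.III i j hij).fibers := Or.inl rfl
    have h2 : ((B i k, C j k)) ∈ (DP2Bundle.III i j hij).fibers :=
      Or.inr ⟨k, hki, hkj, rfl⟩
    have hDi := hD' i
    have hpure1 : sign (A j) = sign (D i) := by
      rcases hval (A i) with h|h <;> rcases hval (A j) with h'|h' <;> omega
    have hall : ∀ p ∈ (DP2Bundle.III i j hij).fibers, sign p.1 = sign p.2 := by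
      intro p hp
      by_contra hm
      exact (hprop _ ⟨p, hp, hm⟩ _ h1) hpure1
    have hpure2 : sign (B i k) = sign (C j k) := hall _ h2
    by_contra hb
    have h3 : sign (B i k) = - sign (A j) := by
      rcases hval (B i k) with h|h <;> rcases hval (A j) with h'|h' <;> omega
    rcases hval (A j) with h|h
    · exact mk _ (A j) (D i) (B i k) (C j k) h1 h2 h (by omega) (by omega) (by omega)
    · exact mk _ (B i k) (C j k) (A j) (D i) h2 h1 (by omega) (by omega) h (by omega)
  by_cases hone : ∃ t : Fin 7, ∀ k, k ≠ t → sign (A k) ≠ sign (A t)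
  · obtain ⟨t, ht⟩ := hone
    set σ := Equiv.swap (0 : Fin 7) t with hσ
    have hσ0 : σ 0 = t := Equiv.swap_apply_left 0 t
    have hne : ∀ k : Fin 7, k ≠ 0 → σ k ≠ t := by
      intro k hk h; exact hk (σ.injective (h.trans hσ0.symm))
    have hinj : ∀ k l : Fin 7, k ≠ l → σ k ≠ σ l := fun k l h => σ.injective.ne h
    have hbkm : ∀ k m : Fin 7, k ≠ t → m ≠ t → k ≠ m → sign (B k m) = sign (A t) :=
      fun k m hk hm hkm => claim3 k t m hk (Ne.symm hkm) hm (ht k hk)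
    have hm1 : ((A (σ 0), C (σ 1) (σ 2))) ∈ (DP2Bundle.II σ).fibers := by
      simp [DP2Bundle.fibers]
    have hm4 : ((B (σ 3) (σ 4), B (σ 5) (σ 6))) ∈ (DP2Bundle.II σ).fibers := by
      simp [DP2Bundle.fibers]
    have e1 := hC' (σ 1) (σ 2) (hinj 1 2 (by decide))
    have e2 := hbkm (σ 1) (σ 2) (hne 1 (by decide)) (hne 2 (by decide)) (hinj 1 2 (by decide))
    have hmix : sign (A (σ 0)) ≠ sign (C (σ 1) (σ 2)) := by
      rw [hσ0]
      rcases hval (A t) with h|h <;> omega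
    have hpure := hprop _ ⟨_, hm1, hmix⟩ _ hm4
    have e3 := hbkm (σ 3) (σ 4) (hne 3 (by decide)) (hne 4 (by decide)) (hinj 3 4 (by decide))
    have e4 := hbkm (σ 5) (σ 6) (hne 5 (by decide)) (hne 6 (by decide)) (hinj 5 6 (by decide))
    exact hpure (show sign (B (σ 3) (σ 4)) = sign (B (σ 5) (σ 6)) by omega)
  · push_neg at hone
    by_cases hall : ∀ i j : Fin 7, sign (A i) = sign (A j)
    · have heq : ∀ i j k : Fin 7, i ≠ j → k ≠ i → k ≠ j →
          sign (B i k) = sign (B j k) := by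
        intro i j k hij hki hkj
        have h1 : ((A j, D i)) ∈ (DP2Bundle.III i j hij).fibers := Or.inl rfl
        have h2 : ((B i k, C j k)) ∈ (DP2Bundle.III i j hij).fibers :=
          Or.inr ⟨k, hki, hkj, rfl⟩
        have hDi := hD' i
        have haij := hall i j
        have hmix1 : sign (A j) ≠ sign (D i) := by
          rcases hval (A j) with h|h <;> omega
        have h5 : sign (B i k) ≠ sign (C j k) := hprop _ ⟨_, h1, hmix1⟩ _ h2
        have hCk := hC' j k (Ne.symm hkj)
        rcases hval (B i k) with h|h <;> rcases hval (B j k) with h'|h' <;> omega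
      have c1 : sign (B 3 4) = sign (B 1 2) := by
        have e1 := heq 1 3 2 (by decide) (by decide) (by decide)
        have e2 := hBsymm 3 2
        have e3 := heq 2 4 3 (by decide) (by decide) (by decide)
        have e4 := hBsymm 4 3
        omega
      have c2 : sign (B 5 6) = sign (B 1 2) := by
        have e1 := heq 5 1 6 (by decide) (by decide) (by decide)
        have e2 := hBsymm 1 6
        have e3 := heq 6 2 1 (by decide) (by decide) (by decide)
        have e4 := hBsymm 2 1
        omega
      have hm1 : ((A 0, C 1 2)) ∈ (DP2Bundle.II (1 : Equiv.Perm (Fin 7))).fibers := by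
        simp [DP2Bundle.fibers]
      have hm4 : ((B 3 4, B 5 6)) ∈ (DP2Bundle.II (1 : Equiv.Perm (Fin 7))).fibers := by
        simp [DP2Bundle.fibers]
      have hC12 := hC' 1 2 (by decide)
      rcases hval (A 0) with hε|hε <;> rcases hval (B 1 2) with hβ|hβ
      · exact (hprop _ ⟨_, hm1, show sign (A 0) ≠ sign (C 1 2) by omega⟩ _ hm4)
          (show sign (B 3 4) = sign (B 5 6) by omega)
      · exact mk _ (A 0) (C 1 2) (B 3 4) (B 5 6) hm1 hm4 hε (by omega) (by omega) (by omega)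
      · exact mk _ (B 3 4) (B 5 6) (A 0) (C 1 2) hm4 hm1 (by omega) (by omega) hε (by omega)
      · exact (hprop _ ⟨_, hm1, show sign (A 0) ≠ sign (C 1 2) by omega⟩ _ hm4)
          (show sign (B 3 4) = sign (B 5 6) by omega)
    · push_neg at hall
      obtain ⟨t, s, hts⟩ := hall
      obtain ⟨k, hkt, hk⟩ := hone t
      obtain ⟨l, hls, hl⟩ := hone s
      have htsn : t ≠ s := by rintro rfl; exact hts rfl
      have hlt : l ≠ t := by rintro rfl; omega
      have hlk : l ≠ k := by rintro rfl; omega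
      have e1 : sign (B t l) = sign (A s) := claim3 t s l htsn hlt hls hts
      have e2 : sign (B l t) = sign (A k) :=
        claim3 l k t hlk (Ne.symm hlt) (Ne.symm hkt) (by omega)
      have e3 := hBsymm t l
      omega
end

section
/- Let sign: {A_1,...,A_7, B_ij, C_ij, D_1,...,D_7} → {1,-1} satisfy sign(A_i) ≠ sign(D_i), sign(B_ij) ≠ sign(C_ij), and the hypothesis that mixed-sign singular fibers of a conic bundle propagate to all singular fibers of that conic bundle. If sign(A_i) = 1 for all i = 1,...,7, then sign(B_ij) = -1 and sign(C_ij) = 1 for all i ≠ j, and consequently every type (II) conic bundle has a singular fiber with both components of sign 1 (namely A_λ + C_{Λ\{λ}}) and a singular fiber with both components of sign -1 (namely B_Γ + B_Δ). -/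
open DP2Line in
/-- Case (1) of the sign lemma: if in addition `sign(Aᵢ) = 1` for all `i`, then
`sign(Bᵢⱼ) = -1` and `sign(Cᵢⱼ) = 1` for all `i ≠ j`; consequently every type (II) conic
bundle has a singular fiber with both components of sign `1` (namely `A_λ + C_{Λ∖{λ}}`) and
a singular fiber with both components of sign `-1` (namely `B_Γ + B_Δ`). -/
theorem dp2_sign_lemma_case_allA (sign : DP2Line → ℤ)
    (hval : ∀ ℓ, sign ℓ = 1 ∨ sign ℓ = -1)
    (hBsymm : ∀ i j, sign (B i j) = sign (B j i))
    (hCsymm : ∀ i j, sign (C i j) = sign (C j i))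
    (hAD : ∀ i, sign (A i) ≠ sign (D i))
    (hBC : ∀ i j, i ≠ j → sign (B i j) ≠ sign (C i j))
    (hprop : ∀ b : DP2Bundle, (∃ p ∈ b.fibers, sign p.1 ≠ sign p.2) →
      ∀ p ∈ b.fibers, sign p.1 ≠ sign p.2)
    (hA1 : ∀ i, sign (A i) = 1) :
    (∀ i j, i ≠ j → sign (B i j) = -1 ∧ sign (C i j) = 1) ∧
    ∀ σ : Equiv.Perm (Fin 7),
      (∃ p ∈ (DP2Bundle.II σ).fibers, sign p.1 = 1 ∧ sign p.2 = 1) ∧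
      (∃ p ∈ (DP2Bundle.II σ).fibers, sign p.1 = -1 ∧ sign p.2 = -1) := by
  have hD : ∀ i, sign (D i) = -1 := by
    intro i
    rcases hval (D i) with h | h
    · exact absurd (by rw [hA1 i, h]) (hAD i)
    · exact h
  -- from a type (III) bundle: B i k and C j k have opposite signs
  have hIII : ∀ i j k : Fin 7, i ≠ j → k ≠ i → k ≠ j →
      sign (B i k) ≠ sign (C j k) := by
    intro i j k hij hki hkj
    have hm := hprop (DP2Bundle.III i j hij)
      ⟨(A j, D i), Or.inl rfl, by simp [hA1, hD]⟩
    exact hm (B i k, C j k) (Or.inr ⟨k, hki, hkj, rfl⟩)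
  have hBB : ∀ a b c : Fin 7, a ≠ b → c ≠ a → c ≠ b →
      sign (B a c) = sign (B b c) := by
    intro a b c hab hca hcb
    have h1 := hIII a b c hab hca hcb
    have h2 := hBC b c (Ne.symm hcb)
    rcases hval (B a c) with h | h <;> rcases hval (B b c) with h' | h' <;>
      rcases hval (C b c) with h'' | h'' <;> omega
  have hsel : ∀ i j k l : Fin 7, ∃ m : Fin 7, m ≠ i ∧ m ≠ j ∧ m ≠ k ∧ m ≠ l := by
    decide
  have hBall : ∀ i j k l : Fin 7, i ≠ j → k ≠ l → sign (B i j) = sign (B k l) := by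
    intro i j k l hij hkl
    obtain ⟨m, hmi, hmj, hmk, hml⟩ := hsel i j k l
    have e1 : sign (B i j) = sign (B m j) := hBB i m j (Ne.symm hmi) hij.symm hmj.symm
    have e2 : sign (B j m) = sign (B k m) := by
      by_cases hjk : j = k
      · rw [hjk]
      · exact hBB j k m hjk hmj hmk
    have e3 : sign (B m k) = sign (B l k) := hBB m l k hml hmk.symm hkl
    calc sign (B i j) = sign (B m j) := e1
      _ = sign (B j m) := hBsymm m j
      _ = sign (B k m) := e2
      _ = sign (B m k) := hBsymm k m
      _ = sign (B l k) := e3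
      _ = sign (B k l) := hBsymm l k
  have hCB : ∀ i j : Fin 7, i ≠ j → sign (C i j) ≠ sign (B 0 1) := by
    intro i j hij
    obtain ⟨m, hmi, hmj, -, -⟩ := hsel i j i j
    have h1 := hIII m i j hmi hmj.symm hij.symm
    have h2 : sign (B m j) = sign (B 0 1) := hBall m j 0 1 hmj (by decide)
    rw [h2] at h1
    exact fun h => h1 (h ▸ rfl)
  have hB01 : sign (B 0 1) = -1 := by
    by_contra hne
    have hB1 : sign (B 0 1) = 1 := by rcases hval (B 0 1) with h | h; exact h; omega
    have hC12 : sign (C 1 2) = -1 := by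
      have := hCB 1 2 (by decide)
      rcases hval (C 1 2) with h | h
      · rw [hB1] at this; omega
      · exact h
    have hmix := hprop (DP2Bundle.II 1)
      ⟨(A 0, C 1 2), by simp [DP2Bundle.fibers], by rw [hA1, hC12]; decide⟩
    have h34 : sign (B 3 4) = 1 := by rw [hBall 3 4 0 1 (by decide) (by decide), hB1]
    have h56 : sign (B 5 6) = 1 := by rw [hBall 5 6 0 1 (by decide) (by decide), hB1]
    exact hmix (B 3 4, B 5 6) (by simp [DP2Bundle.fibers]) (by rw [h34, h56])
  have hBval : ∀ i j : Fin 7, i ≠ j → sign (B i j) = -1 := fun i j hij => by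
    rw [hBall i j 0 1 hij (by decide), hB01]
  have hCval : ∀ i j : Fin 7, i ≠ j → sign (C i j) = 1 := fun i j hij => by
    have := hCB i j hij
    rw [hB01] at this
    rcases hval (C i j) with h | h
    · exact h
    · omega
  refine ⟨fun i j hij => ⟨hBval i j hij, hCval i j hij⟩, fun σ => ?_⟩
  constructor
  · refine ⟨(A (σ 0), C (σ 1) (σ 2)), Set.mem_insert _ _, hA1 _, ?_⟩
    exact hCval _ _ (σ.injective.ne (by decide))
  · refine ⟨(B (σ 3) (σ 4), B (σ 5) (σ 6)), ?_, ?_, ?_⟩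
    · simp only [DP2Bundle.fibers, Set.mem_insert_iff, Set.mem_singleton_iff]
      tauto
    · exact hBval _ _ (σ.injective.ne (by decide))
    · exact hBval _ _ (σ.injective.ne (by decide))
end

section
/- Let W ⊂ |O_{P^3}(2)| be a base-point-free 3-dimensional linear system of quadrics. Then for every line ℓ ⊂ P^3 contained in the base locus of some pencil L ⊂ W, the pencil L is unique: if ℓ ⊂ Bs(L) and ℓ ⊂ Bs(L') for pencils L, L' ⊂ W with L ≠ L', then W has a base point, contradiction. -/
set_option maxHeartbeats 2000000 in
set_option maxSynthPendingDepth 3 in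
set_option synthInstance.maxHeartbeats 2000000 in


/-- For a base-point-free 3-dimensional linear system `W` of quadrics in `ℙ³` (a linear
subspace of quadratic forms of vector-space dimension 4), a line `ℓ ⊂ ℙ³` (a 2-dimensional
subspace of `k⁴`) lies in the base locus of at most one pencil `L ⊂ W`: two distinct such
pencils would force a base point of `W` on `ℓ`. -/
theorem reye_pencil_unique {k : Type*} [Field k] [IsAlgClosed k]
    (W : Submodule k (QuadraticForm k (Fin 4 → k)))
    (hW : Module.finrank k W = 4)
    (hbpf : ∀ x : Fin 4 → k, x ≠ 0 → ∃ Q ∈ W, Q x ≠ 0)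
    (ℓ : Submodule k (Fin 4 → k)) (hl : Module.finrank k ℓ = 2)
    (L L' : Submodule k (QuadraticForm k (Fin 4 → k)))
    (hLW : L ≤ W) (hL'W : L' ≤ W)
    (hLr : Module.finrank k L = 2) (hL'r : Module.finrank k L' = 2)
    (hbs : ∀ Q ∈ L, ∀ x ∈ ℓ, Q x = 0)
    (hbs' : ∀ Q ∈ L', ∀ x ∈ ℓ, Q x = 0) :
    L = L' := by
  by_contra hne
  have hWfd : FiniteDimensional k W := .of_finrank_pos (by rw [hW]; norm_num)
  have hLfd : FiniteDimensional k L := .of_finrank_pos (by rw [hLr]; norm_num)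
  have hL'fd : FiniteDimensional k L' := .of_finrank_pos (by rw [hL'r]; norm_num)
  have hlfd : FiniteDimensional k ℓ := .of_finrank_pos (by rw [hl]; norm_num)
  -- the intersection of the two pencils has dimension at most 1
  have hinf : Module.finrank k ↥(L ⊓ L') ≤ 1 := by
    by_contra h
    push_neg at h
    have h1 : L ⊓ L' = L :=
      Submodule.eq_of_le_of_finrank_le inf_le_left (by omega)
    have h2 : L ⊓ L' = L' :=
      Submodule.eq_of_le_of_finrank_le inf_le_right (by omega)
    exact hne (h1 ▸ h2)
  have hsup : 3 ≤ Module.finrank k ↥(L ⊔ L') := by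
    have := Submodule.finrank_sup_add_finrank_inf_eq L L'
    omega
  -- a basis of the line
  obtain b := Module.finBasisOfFinrankEq k ℓ hl
  set e1 : Fin 4 → k := (b 0 : Fin 4 → k) with he1
  set e2 : Fin 4 → k := (b 1 : Fin 4 → k) with he2
  have he1m : e1 ∈ ℓ := (b 0).2
  have he2m : e2 ∈ ℓ := (b 1).2
  -- the evaluation map on W
  let φ : W →ₗ[k] (Fin 3 → k) :=
    { toFun := fun Q => ![Q.1 e1, Q.1 e2, Q.1 (e1 + e2)]
      map_add' := by
        intro Q Q'
        funext i
        fin_cases i <;> simp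
      map_smul' := by
        intro c Q
        funext i
        fin_cases i <;> simp }
  -- the preimage of L ⊔ L' in W is contained in ker φ and has finrank ≥ 3
  have hker : ∀ Q : QuadraticForm k (Fin 4 → k), Q ∈ L ⊔ L' → ∀ x ∈ ℓ, Q x = 0 := by
    intro Q hQ x hx
    obtain ⟨a, ha, c, hc, rfl⟩ := Submodule.mem_sup.mp hQ
    have := hbs a ha x hx
    have := hbs' c hc x hx
    simp [QuadraticMap.add_apply, *]
  have hS : (L ⊔ L').comap W.subtype ≤ LinearMap.ker φ := by
    intro Q hQ
    have hQ' : (Q : QuadraticForm k (Fin 4 → k)) ∈ L ⊔ L' := hQ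
    have h1 := hker _ hQ' e1 he1m
    have h2 := hker _ hQ' e2 he2m
    have h3 := hker _ hQ' (e1 + e2) (add_mem he1m he2m)
    simp only [LinearMap.mem_ker]
    funext i
    fin_cases i <;> simpa [φ]
  have hSr : Module.finrank k ↥((L ⊔ L').comap W.subtype)
      = Module.finrank k ↥(L ⊔ L') :=
    (Submodule.comapSubtypeEquivOfLe (sup_le hLW hL'W)).finrank_eq
  have hkerr : 3 ≤ Module.finrank k ↥(LinearMap.ker φ) := by
    have := Submodule.finrank_mono hS
    omega
  have hrange : Module.finrank k ↥(LinearMap.range φ) ≤ 1 := by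
    have := LinearMap.finrank_range_add_finrank_ker φ
    omega
  -- the range is generated by a single vector v
  obtain ⟨v, hv⟩ : ∃ v : Fin 3 → k, ∀ Q ∈ W, ∃ c : k,
      (Q e1 = c * v 0 ∧ Q e2 = c * v 1) ∧ Q (e1 + e2) = c * v 2 := by
    obtain ⟨v0, hv0⟩ := finrank_le_one_iff.mp hrange
    refine ⟨(v0 : Fin 3 → k), fun Q hQ => ?_⟩
    obtain ⟨c, hc⟩ := hv0 ⟨φ ⟨Q, hQ⟩, LinearMap.mem_range_self _ _⟩
    have hc' : c • (v0 : Fin 3 → k) = φ ⟨Q, hQ⟩ := congrArg Subtype.val hc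
    refine ⟨c, ?_⟩
    have h0 := congrFun hc' 0
    have h1 := congrFun hc' 1
    have h2 := congrFun hc' 2
    simp only [Pi.smul_apply, smul_eq_mul, Matrix.cons_val_zero, Matrix.cons_val_one,
      Matrix.head_cons, Matrix.cons_val_two, Matrix.tail_cons] at h0 h1 h2
    exact ⟨⟨h0.symm, h1.symm⟩, h2.symm⟩
  -- produce a base point of W on ℓ
  have hlin : ∀ a : k, a • e1 + e2 ≠ 0 := by
    intro a h
    have h' : a • b 0 + b 1 = 0 := by
      apply Subtype.val_injective
      simpa using h
    have hli := Fintype.linearIndependent_iff.mp b.linearIndependent ![a, 1]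
      (by simpa [Fin.sum_univ_two] using h') 1
    simp at hli
  have hbase : ∃ x : Fin 4 → k, x ≠ 0 ∧ ∀ Q ∈ W, Q x = 0 := by
    by_cases hα : v 0 = 0
    · refine ⟨e1, ?_, fun Q hQ => ?_⟩
      · intro h
        have : (b 0 : Fin 4 → k) ≠ 0 := by
          simpa [Submodule.coe_eq_zero] using b.ne_zero 0
        exact this h
      · obtain ⟨c, ⟨h1, -⟩, -⟩ := hv Q hQ
        rw [h1, hα, mul_zero]
    · -- solve the binary quadratic α a² + (γ - α - β) a + β = 0
      obtain ⟨a, ha⟩ := IsAlgClosed.exists_root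
        (Polynomial.C (v 0) * Polynomial.X ^ 2
          + Polynomial.C (v 2 - v 0 - v 1) * Polynomial.X + Polynomial.C (v 1))
        (by rw [Polynomial.degree_quadratic hα]; exact two_ne_zero)
      have haeq : v 0 * a ^ 2 + (v 2 - v 0 - v 1) * a + v 1 = 0 := by
        have := ha
        simp only [Polynomial.IsRoot, Polynomial.eval_add, Polynomial.eval_mul,
          Polynomial.eval_pow, Polynomial.eval_C, Polynomial.eval_X] at this
        linear_combination this
      refine ⟨a • e1 + e2, hlin a, fun Q hQ => ?_⟩
      obtain ⟨c, ⟨h1, h2⟩, h3⟩ := hv Q hQ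
      have hpolar : QuadraticMap.polar Q e1 e2 = Q (e1 + e2) - Q e1 - Q e2 := rfl
      have hQx : Q (a • e1 + e2)
          = a * a * Q e1 + Q e2 + a * (Q (e1 + e2) - Q e1 - Q e2) := by
        have : Q (a • e1 + e2) = Q (a • e1) + Q e2 + QuadraticMap.polar Q (a • e1) e2 := by
          rw [QuadraticMap.polar]; ring
        rw [this, QuadraticMap.map_smul, QuadraticMap.polar_smul_left, hpolar]
        simp only [smul_eq_mul]
      rw [hQx, h1, h2, h3]
      have : a * a * (c * v 0) + c * v 1 + a * (c * v 2 - c * v 0 - c * v 1)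
          = c * (v 0 * a ^ 2 + (v 2 - v 0 - v 1) * a + v 1) := by ring
      rw [this, haeq, mul_zero]
  obtain ⟨x, hx0, hx⟩ := hbase
  obtain ⟨Q, hQW, hQx⟩ := hbpf x hx0
  exact hQx (hx Q hQW)
end
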